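/- arXiv:0811.1457 — 2 statements merged into one kernel-verified Lean document; each statement's English description precedes it below -/
import Mathlib

section
/- Let H and K be complex Hilbert spaces and f : H → K a continuous linear map. Then there exist complex Hilbert spaces I and J and continuous linear maps e : H → I, b : I → J, m : J → K such that e ∘ (adjoint e) = id (a †-epi/coisometry), b is injective with dense range, (adjoint m) ∘ m = id (a †-mono/isometry), and f = m ∘ b ∘ e. -/
/-!
Take `I = (ker f)ᗮ` with `e` the orthogonal projection onto it, and `J` the closure of the range
of `f` restricted to `I`, with `m` the inclusion. Since `f` kills the component of `x` in `ker f`,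
`f = m ∘ b ∘ e` for `b` the corestriction of `f|_I`, which is injective because
`ker f ⊓ (ker f)ᗮ = ⊥` and has dense range by the choice of `J`.
-/

open ContinuousLinearMap Set
open scoped InnerProduct

theorem denseRange_codRestrict_closure_range {X Y : Type*} [TopologicalSpace Y] (g : X → Y) :
    DenseRange (codRestrict g (closure (range g)) fun x ↦ subset_closure (mem_range_self x)) := by
  rw [DenseRange, Subtype.dense_iff, ← range_comp]
  exact subset_rfl

namespace Submodule

variable {𝕜 E : Type*} [RCLike 𝕜] [NormedAddCommGroup E] [InnerProductSpace 𝕜 E]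

theorem orthogonalProjectionOnto_comp_subtypeL (U : Submodule 𝕜 E) [U.HasOrthogonalProjection] :
    U.orthogonalProjectionOnto ∘L U.subtypeL = ContinuousLinearMap.id 𝕜 U := by
  ext x
  simp [orthogonalProjectionOnto_mem_subspace_eq_self]

variable [CompleteSpace E]

theorem orthogonalProjectionOnto_comp_adjoint (U : Submodule 𝕜 E) [CompleteSpace U] :
    U.orthogonalProjectionOnto ∘L U.orthogonalProjectionOnto† = ContinuousLinearMap.id 𝕜 U := by
  rw [adjoint_orthogonalProjectionOnto, orthogonalProjectionOnto_comp_subtypeL]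

theorem adjoint_subtypeL_comp_subtypeL (U : Submodule 𝕜 E) [CompleteSpace U] :
    U.subtypeL† ∘L U.subtypeL = ContinuousLinearMap.id 𝕜 U := by
  rw [adjoint_subtypeL, orthogonalProjectionOnto_comp_subtypeL]

end Submodule

namespace ContinuousLinearMap

variable {𝕜 E F : Type*} [RCLike 𝕜] [NormedAddCommGroup E] [InnerProductSpace 𝕜 E]
  [NormedAddCommGroup F] [InnerProductSpace 𝕜 F]

theorem comp_starProjection_orthogonal_ker [CompleteSpace E] (f : E →L[𝕜] F) :
    f ∘L f.kerᗮ.starProjection = f := by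
  ext x
  have hker : x - f.kerᗮ.starProjection x ∈ f.ker := by
    have hperp := f.kerᗮ.sub_starProjection_mem_orthogonal x
    rwa [Submodule.orthogonal_orthogonal_eq_closure,
      f.isClosed_ker.submodule_topologicalClosure_eq] at hperp
  rw [LinearMap.mem_ker, coe_coe, map_sub, sub_eq_zero] at hker
  exact hker.symm

theorem injective_comp_subtypeL_orthogonal_ker (f : E →L[𝕜] F) :
    Function.Injective (f ∘L f.kerᗮ.subtypeL) := by
  refine (injective_iff_map_eq_zero _).2 fun x hx ↦ ?_
  have hx' : (x : E) ∈ f.ker ⊓ f.kerᗮ := ⟨hx, x.2⟩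
  rw [Submodule.inf_orthogonal_eq_bot, Submodule.mem_bot] at hx'
  exact Subtype.ext hx'

end ContinuousLinearMap

/-- Generalised polar decomposition: every continuous linear map between complex Hilbert
spaces factors as a †-epi (coisometry), followed by a monic epimorphism (injective map with
dense range), followed by a †-mono (isometry). -/
theorem exists_dagger_epi_monicEpi_dagger_mono_factorisation
    {H K : Type} [NormedAddCommGroup H] [InnerProductSpace ℂ H] [CompleteSpace H]
    [NormedAddCommGroup K] [InnerProductSpace ℂ K] [CompleteSpace K]
    (f : H →L[ℂ] K) :
    ∃ (I : Type) (_ : NormedAddCommGroup I) (_ : InnerProductSpace ℂ I) (_ : CompleteSpace I)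
      (J : Type) (_ : NormedAddCommGroup J) (_ : InnerProductSpace ℂ J) (_ : CompleteSpace J)
      (e : H →L[ℂ] I) (b : I →L[ℂ] J) (m : J →L[ℂ] K),
      e.comp (ContinuousLinearMap.adjoint e) = ContinuousLinearMap.id ℂ I ∧
      Function.Injective b ∧ Dense (Set.range b) ∧
      (ContinuousLinearMap.adjoint m).comp m = ContinuousLinearMap.id ℂ J ∧
      f = m.comp (b.comp e) := by
  let I := f.kerᗮ
  let g := f ∘L I.subtypeL
  let J := g.range.topologicalClosure
  let b : I →L[ℂ] J := g.codRestrict J fun x ↦ g.range.le_topologicalClosure ⟨x, rfl⟩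
  refine ⟨I, inferInstance, inferInstance, inferInstance, J, inferInstance, inferInstance,
    inferInstance, I.orthogonalProjectionOnto, b, J.subtypeL,
    I.orthogonalProjectionOnto_comp_adjoint, f.injective_comp_subtypeL_orthogonal_ker.codRestrict _,
    denseRange_codRestrict_closure_range g, J.adjoint_subtypeL_comp_subtypeL,
    f.comp_starProjection_orthogonal_ker.symm⟩
end

section
/- Let X, Y be complex Hilbert spaces and f : X → Y, g : Y → X continuous linear maps. Suppose that for all closed subspaces M of X and N of Y: N ⊆ (∃_f(M))ᗮ if and only if M ⊆ (∃_g(N))ᗮ. Then there exists a scalar c ∈ ℂ such that g = c • (adjoint f); moreover, if f ≠ 0 this scalar c is unique. -/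
/-!
Testing the hypothesis on lines `M = ℂ ∙ x`, `N = ℂ ∙ y` gives `⟪f x, y⟫ = 0 ↔ ⟪g y, x⟫ = 0`,
i.e. `g y` and `f† y` have the same orthogonal complement, so `g y ∈ ℂ ∙ f† y` for every `y`.
A linear map that is pointwise proportional to another is a global scalar multiple of it.
-/

open scoped InnerProductSpace

/- Fix `T v₀ ≠ 0`. Comparing the ratios at `v`, `v₀` and `v + v₀` either forces them to agree,
or makes `T v = t • T v₀`, and then `v - t • v₀ ∈ ker T ⊆ ker g`. -/
theorem LinearMap.exists_eq_smul_of_forall_mem_span_singleton {K V W : Type*} [Field K]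
    [AddCommGroup V] [Module K V] [AddCommGroup W] [Module K W] {g T : V →ₗ[K] W}
    (h : ∀ v, g v ∈ K ∙ T v) : ∃ c : K, g = c • T := by
  choose a ha using fun v ↦ Submodule.mem_span_singleton.mp (h v)
  have ker_le : ∀ v, T v = 0 → g v = 0 := fun v hv ↦ by rw [← ha v, hv, smul_zero]
  by_cases hT : T = 0
  · exact ⟨0, LinearMap.ext fun v ↦ by simp [ker_le v (by simp [hT])]⟩
  obtain ⟨v₀, hv₀⟩ : ∃ v₀, T v₀ ≠ 0 := by
    by_contra! hT'
    exact hT (LinearMap.ext hT')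
  refine ⟨a v₀, LinearMap.ext fun v ↦ ?_⟩
  have hsum : (a v - a (v + v₀)) • T v = (a (v + v₀) - a v₀) • T v₀ := by
    have h_add := ha (v + v₀)
    rw [map_add, map_add, ← ha v, ← ha v₀] at h_add
    linear_combination (norm := module) -h_add
  by_cases hav : a v = a (v + v₀)
  · rw [hav, sub_self, zero_smul, eq_comm, smul_eq_zero, sub_eq_zero] at hsum
    rw [LinearMap.smul_apply, ← ha v, hav, hsum.resolve_right hv₀]
  · obtain ⟨t, hTv⟩ : ∃ t : K, T v = t • T v₀ :=
      ⟨(a v - a (v + v₀))⁻¹ * (a (v + v₀) - a v₀), by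
        rw [mul_smul, ← hsum, inv_smul_smul₀ (sub_ne_zero.mpr hav)]⟩
    have hgv : g v = t • g v₀ := by
      rw [← sub_eq_zero, ← map_smul, ← map_sub]
      exact ker_le _ (by rw [map_sub, map_smul, hTv, sub_self])
    rw [LinearMap.smul_apply, hgv, ← ha v₀, hTv, smul_comm]

theorem Submodule.mem_span_singleton_of_orthogonal_le {𝕜 E : Type*} [RCLike 𝕜]
    [NormedAddCommGroup E] [InnerProductSpace 𝕜 E] {u v : E} (h : (𝕜 ∙ u)ᗮ ≤ (𝕜 ∙ v)ᗮ) :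
    v ∈ 𝕜 ∙ u :=
  (Submodule.span_singleton_le_iff_mem v _).mp (Submodule.orthogonal_le_orthogonal_iff.mp h)

section PerpAdjunction

variable {𝕜 X Y : Type*} [RCLike 𝕜] [NormedAddCommGroup X] [InnerProductSpace 𝕜 X]
  [NormedAddCommGroup Y] [InnerProductSpace 𝕜 Y] {f : X →L[𝕜] Y} {g : Y →L[𝕜] X}

theorem inner_eq_zero_iff_of_perp_adjunction
    (h : ∀ (M : Submodule 𝕜 X) (N : Submodule 𝕜 Y),
      IsClosed (M : Set X) → IsClosed (N : Set Y) →
      (N ≤ ((Submodule.map (f : X →ₗ[𝕜] Y) M).topologicalClosure)ᗮ ↔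
        M ≤ ((Submodule.map (g : Y →ₗ[𝕜] X) N).topologicalClosure)ᗮ))
    (x : X) (y : Y) : ⟪f x, y⟫_𝕜 = 0 ↔ ⟪g y, x⟫_𝕜 = 0 := by
  have := h (𝕜 ∙ x) (𝕜 ∙ y) (Submodule.closed_of_finiteDimensional _)
    (Submodule.closed_of_finiteDimensional _)
  simpa [Submodule.map_span, Submodule.orthogonal_closure,
    Submodule.mem_orthogonal_singleton_iff_inner_right] using this

end PerpAdjunction

/-- Converse of the adjunction theorem: if for all closed subspaces `M` of `X` and `N` of
`Y` we have `N ⊥ ∃_f(M)` iff `M ⊥ ∃_g(N)`, then `g` is a scalar multiple of the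
Hilbert-space adjoint of `f`; the scalar is unique when `f ≠ 0`. -/
theorem smul_adjoint_of_perp_adjunction
    {X Y : Type*} [NormedAddCommGroup X] [InnerProductSpace ℂ X] [CompleteSpace X]
    [NormedAddCommGroup Y] [InnerProductSpace ℂ Y] [CompleteSpace Y]
    (f : X →L[ℂ] Y) (g : Y →L[ℂ] X)
    (h : ∀ (M : Submodule ℂ X) (N : Submodule ℂ Y),
      IsClosed (M : Set X) → IsClosed (N : Set Y) →
      (N ≤ ((Submodule.map (f : X →ₗ[ℂ] Y) M).topologicalClosure)ᗮ ↔
        M ≤ ((Submodule.map (g : Y →ₗ[ℂ] X) N).topologicalClosure)ᗮ)) :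
    (∃ c : ℂ, g = c • ContinuousLinearMap.adjoint f) ∧
    (f ≠ 0 → ∃! c : ℂ, g = c • ContinuousLinearMap.adjoint f) := by
  set A := ContinuousLinearMap.adjoint f
  have hg_mem : ∀ y, g y ∈ ℂ ∙ A y := fun y ↦
    Submodule.mem_span_singleton_of_orthogonal_le fun x hx ↦ by
      rw [Submodule.mem_orthogonal_singleton_iff_inner_right] at hx ⊢
      rwa [← inner_eq_zero_iff_of_perp_adjunction h, inner_eq_zero_symm,
        ← ContinuousLinearMap.adjoint_inner_left]
  obtain ⟨c, hc⟩ := LinearMap.exists_eq_smul_of_forall_mem_span_singleton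
    (g := (g : Y →ₗ[ℂ] X)) (T := A) hg_mem
  have hgc : g = c • A := ContinuousLinearMap.coe_injective hc
  refine ⟨⟨c, hgc⟩, fun hf ↦ ⟨c, hgc, fun c' hc' ↦ ?_⟩⟩
  have hA : A ≠ 0 := by simpa [A] using hf
  exact smul_left_injective ℂ hA (hc'.symm.trans hgc)
end
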